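/- Let the group Circle of unit complex numbers act on the unit sphere S⁴ = {(a,h,c) ∈ ℂ×ℝ×ℂ : |a|²+h²+|c|² = 1} by s·(a,h,c) = (sa, h, sc). Then there is a homeomorphism Φ from the orbit space S⁴/Circle to the unit sphere S³ = {(x,r,t) ∈ ℂ×ℝ×ℝ : |x|²+r²+t² = 1} such that for all s ∈ Circle and all (a,h,c) ∈ S⁴, writing Φ([a,h,c]) = (x,r,t), one has Φ([sa, h, c]) = (sx, r, t). -/

import Mathlib

/-!
The map `(a, h, c) ↦ (2 a c̄, h, |a|² - |c|²)` is constant on orbits, and by the identity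
`|2 a c̄|² + (|a|² - |c|²)² = (|a|² + |c|²)²` it maps `S⁴` onto the spindle
`{(X, h, T) : |X|² + T² = (1 - h²)²}`; two points with the same image differ by a phase. Scaling
`(x, t)` by `√(1 - r²)` maps `S³` bijectively onto the same spindle. Both maps are continuous
bijections from compact spaces onto a Hausdorff space, hence homeomorphisms, and both intertwine
multiplication of the first coordinate by `s ∈ Circle`.
-/

/-- The unit sphere `S⁴ ⊂ ℂ × ℝ × ℂ`. -/
abbrev SphereCRC : Type := {q : ℂ × ℝ × ℂ // ‖q.1‖ ^ 2 + q.2.1 ^ 2 + ‖q.2.2‖ ^ 2 = 1}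

/-- The unit sphere `S³ ⊂ ℂ × ℝ × ℝ`. -/
abbrev SphereCRR : Type := {q : ℂ × ℝ × ℝ // ‖q.1‖ ^ 2 + q.2.1 ^ 2 + q.2.2 ^ 2 = 1}

/-- The defining `Circle`-action `s · (a, h, c) = (s a, h, s c)` on `S⁴`. -/
def actFirstThird (s : Circle) (x : SphereCRC) : SphereCRC :=
  ⟨((s : ℂ) * x.val.1, x.val.2.1, (s : ℂ) * x.val.2.2), by
    have h := x.property; simpa [Circle.norm_coe] using h⟩

/-- The auxiliary action `s · (a, h, c) = (s a, h, c)` on `S⁴`. -/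
def actFirst (s : Circle) (x : SphereCRC) : SphereCRC :=
  ⟨((s : ℂ) * x.val.1, x.val.2.1, x.val.2.2), by
    have h := x.property; simpa [Circle.norm_coe] using h⟩

/-- The orbit relation of the `Circle`-action `s · (a, h, c) = (s a, h, s c)` on `S⁴`. -/
def orbitRelS4 (x y : SphereCRC) : Prop := ∃ s : Circle, actFirstThird s x = y

open scoped ComplexConjugate

lemma Circle.coe_mul_conj (s : Circle) : (s : ℂ) * conj (s : ℂ) = 1 := by
  rw [Complex.mul_conj, Circle.normSq_coe, Complex.ofReal_one]

lemma Circle.exists_mul_eq_of_norm_eq {z w : ℂ} (h : ‖z‖ = ‖w‖) : ∃ s : Circle, s * z = w := by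
  rcases eq_or_ne z 0 with rfl | hz
  · exact ⟨1, by simpa [eq_comm] using h⟩
  · have hw : w ≠ 0 := norm_ne_zero_iff.1 (h ▸ norm_ne_zero_iff.2 hz)
    refine ⟨⟨w / z, ?_⟩, div_mul_cancel₀ w hz⟩
    simp [Submonoid.unitSphere, h, hw]

namespace Complex

lemma norm_two_mul_mul_conj_sq_add_sq (a c : ℂ) :
    ‖2 * a * conj c‖ ^ 2 + (‖a‖ ^ 2 - ‖c‖ ^ 2) ^ 2 = (‖a‖ ^ 2 + ‖c‖ ^ 2) ^ 2 := by
  simp only [norm_mul, RCLike.norm_conj, Complex.norm_two]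
  ring

lemma exists_circle_of_mul_conj_eq {a c a' c' : ℂ} (ha : ‖a‖ = ‖a'‖) (hc : ‖c‖ = ‖c'‖)
    (h : a * conj c = a' * conj c') : ∃ s : Circle, s * a = a' ∧ s * c = c' := by
  rcases eq_or_ne a 0 with rfl | ha0
  · obtain ⟨s, hs⟩ := Circle.exists_mul_eq_of_norm_eq hc
    exact ⟨s, by simpa [eq_comm] using ha, hs⟩
  · obtain ⟨s, rfl⟩ := Circle.exists_mul_eq_of_norm_eq ha
    have hconj : conj c = s * conj c' := mul_left_cancel₀ ha0 (by rw [h]; ring)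
    refine ⟨s, rfl, ?_⟩
    calc (s : ℂ) * c = s * conj (s : ℂ) * c' := by
          rw [← conj_conj c, hconj, map_mul, conj_conj]; ring
      _ = c' := by rw [Circle.coe_mul_conj, one_mul]

lemma exists_two_mul_mul_conj_eq (X : ℂ) (T : ℝ) :
    ∃ a c : ℂ, 2 * a * conj c = X ∧ ‖a‖ ^ 2 - ‖c‖ ^ 2 = T := by
  set m := √(‖X‖ ^ 2 + T ^ 2)
  have hm : m ^ 2 = ‖X‖ ^ 2 + T ^ 2 := Real.sq_sqrt (by positivity)
  have hTm : T ≤ m := Real.le_sqrt_of_sq_le (by nlinarith [sq_nonneg ‖X‖])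
  -- `m` is `‖a‖ ^ 2 + ‖c‖ ^ 2`; take `c ≥ 0` real and put the phase of `X` on `a`.
  rcases hTm.eq_or_lt with hTm | hlt
  · have hX : X = 0 := by simpa using (show ‖X‖ ^ 2 = 0 by rw [← hTm] at hm; linarith)
    refine ⟨(√T : ℂ), 0, by simp [hX], ?_⟩
    simp [Complex.norm_real, Real.sq_sqrt (hTm ▸ Real.sqrt_nonneg _ : 0 ≤ T)]
  · set c := √((m - T) / 2)
    have hc : c ^ 2 = (m - T) / 2 := Real.sq_sqrt (by linarith)
    have hc0 : 0 < c := Real.sqrt_pos.2 (by linarith)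
    have hc0' : (c : ℂ) ≠ 0 := ofReal_ne_zero.2 hc0.ne'
    refine ⟨X / (2 * c), c, ?_, ?_⟩
    · rw [conj_ofReal]
      field_simp
    · rw [norm_div, norm_mul, Complex.norm_two, norm_real, Real.norm_of_nonneg hc0.le]
      field_simp
      linear_combination (-1) * hm + (-4 * (c ^ 2 + (m - T) / 2) - 4 * T) * hc
end Complex

lemma isCompact_setOf_norm_sq_add_norm_sq_add_norm_sq_eq_one {A B C : Type*}
    [NormedAddCommGroup A] [NormedAddCommGroup B] [NormedAddCommGroup C]
    [ProperSpace A] [ProperSpace B] [ProperSpace C] :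
    IsCompact {q : A × B × C | ‖q.1‖ ^ 2 + ‖q.2.1‖ ^ 2 + ‖q.2.2‖ ^ 2 = 1} := by
  refine (isCompact_closedBall (0 : A × B × C) 1).of_isClosed_subset
    (isClosed_eq (by fun_prop) continuous_const) fun q (hq : _ = _) => ?_
  rw [mem_closedBall_zero_iff, norm_prod_le_iff, norm_prod_le_iff]
  simp only [← pow_le_one_iff_of_nonneg (norm_nonneg _) two_ne_zero]
  refine ⟨?_, ?_, ?_⟩ <;> nlinarith [sq_nonneg ‖q.1‖, sq_nonneg ‖q.2.1‖, sq_nonneg ‖q.2.2‖]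

instance : CompactSpace SphereCRC :=
  isCompact_iff_compactSpace.1
    (by simpa only [Real.norm_eq_abs, sq_abs] using
        isCompact_setOf_norm_sq_add_norm_sq_add_norm_sq_eq_one (A := ℂ) (B := ℝ) (C := ℂ) :
      IsCompact {q : ℂ × ℝ × ℂ | ‖q.1‖ ^ 2 + q.2.1 ^ 2 + ‖q.2.2‖ ^ 2 = 1})

instance : CompactSpace SphereCRR :=
  isCompact_iff_compactSpace.1
    (by simpa only [Real.norm_eq_abs, sq_abs] using
        isCompact_setOf_norm_sq_add_norm_sq_add_norm_sq_eq_one (A := ℂ) (B := ℝ) (C := ℝ) :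
      IsCompact {q : ℂ × ℝ × ℝ | ‖q.1‖ ^ 2 + q.2.1 ^ 2 + q.2.2 ^ 2 = 1})

abbrev Spindle : Type :=
  {q : ℂ × ℝ × ℝ // ‖q.1‖ ^ 2 + q.2.2 ^ 2 = (1 - q.2.1 ^ 2) ^ 2 ∧ q.2.1 ^ 2 ≤ 1}

def rotateSpindle (s : Circle) (e : Spindle) : Spindle :=
  ⟨((s : ℂ) * e.val.1, e.val.2.1, e.val.2.2), by simpa [Circle.norm_coe] using e.2⟩

def rotateSphereCRR (s : Circle) (y : SphereCRR) : SphereCRR :=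
  ⟨((s : ℂ) * y.val.1, y.val.2.1, y.val.2.2), by simpa [Circle.norm_coe] using y.2⟩

noncomputable def hopfSpindle (x : SphereCRC) : Spindle :=
  ⟨(2 * x.val.1 * conj x.val.2.2, x.val.2.1, ‖x.val.1‖ ^ 2 - ‖x.val.2.2‖ ^ 2), by
    refine ⟨?_, by nlinarith [x.2, sq_nonneg ‖x.val.1‖, sq_nonneg ‖x.val.2.2‖]⟩
    rw [Complex.norm_two_mul_mul_conj_sq_add_sq]
    congr 1
    linarith [x.2]⟩

lemma continuous_hopfSpindle : Continuous hopfSpindle := by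
  unfold hopfSpindle
  fun_prop

lemma hopfSpindle_actFirstThird (s : Circle) (x : SphereCRC) :
    hopfSpindle (actFirstThird s x) = hopfSpindle x := by
  ext
  · simp only [hopfSpindle, actFirstThird, map_mul]
    linear_combination (2 * x.val.1 * conj x.val.2.2) * s.coe_mul_conj
  · rfl
  · simp [hopfSpindle, actFirstThird, Circle.norm_coe]

lemma hopfSpindle_actFirst (s : Circle) (x : SphereCRC) :
    hopfSpindle (actFirst s x) = rotateSpindle s (hopfSpindle x) := by
  ext
  · simp only [hopfSpindle, actFirst, rotateSpindle]
    ring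
  · rfl
  · simp [hopfSpindle, actFirst, rotateSpindle, Circle.norm_coe]

lemma orbitRelS4_of_hopfSpindle_eq {x y : SphereCRC} (h : hopfSpindle x = hopfSpindle y) :
    orbitRelS4 x y := by
  obtain ⟨⟨a, r, c⟩, hx⟩ := x
  obtain ⟨⟨a', r', c'⟩, hy⟩ := y
  simp only [hopfSpindle, Subtype.mk.injEq, Prod.mk.injEq] at h hx hy
  obtain ⟨hX, rfl, hT⟩ := h
  have hna : ‖a‖ = ‖a'‖ := by
    rw [← sq_eq_sq₀ (norm_nonneg _) (norm_nonneg _)]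
    linarith
  have hnc : ‖c‖ = ‖c'‖ := by
    rw [← sq_eq_sq₀ (norm_nonneg _) (norm_nonneg _)]
    linarith
  obtain ⟨s, hsa, hsc⟩ :=
    Complex.exists_circle_of_mul_conj_eq hna hnc (by linear_combination hX / 2)
  exact ⟨s, by simp [actFirstThird, hsa, hsc]⟩

lemma hopfSpindle_surjective : Function.Surjective hopfSpindle := by
  rintro ⟨⟨X, r, T⟩, hE, hr⟩
  obtain ⟨a, c, hX, hT⟩ := Complex.exists_two_mul_mul_conj_eq X T
  have hsum : ‖a‖ ^ 2 + ‖c‖ ^ 2 = 1 - r ^ 2 := by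
    rw [← sq_eq_sq₀ (by positivity) (by linarith), ← Complex.norm_two_mul_mul_conj_sq_add_sq,
      hX, hT]
    exact hE
  exact ⟨⟨(a, r, c), by linarith⟩, by simp [hopfSpindle, hX, hT]⟩

noncomputable def orbitToSpindle : Quot orbitRelS4 → Spindle :=
  Quot.lift hopfSpindle fun _ _ ⟨s, hs⟩ => hs ▸ (hopfSpindle_actFirstThird s _).symm

lemma orbitToSpindle_bijective : Function.Bijective orbitToSpindle := by
  refine ⟨fun p q => ?_, fun e => ?_⟩
  · induction p using Quot.ind
    induction q using Quot.ind
    exact fun h => Quot.sound (orbitRelS4_of_hopfSpindle_eq h)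
  · obtain ⟨x, rfl⟩ := hopfSpindle_surjective e
    exact ⟨Quot.mk _ x, rfl⟩

noncomputable def radialSpindle (y : SphereCRR) : Spindle :=
  ⟨((√(1 - y.val.2.1 ^ 2) : ℂ) * y.val.1, y.val.2.1, √(1 - y.val.2.1 ^ 2) * y.val.2.2), by
    have hr : y.val.2.1 ^ 2 ≤ 1 := by nlinarith [y.2, sq_nonneg ‖y.val.1‖, sq_nonneg y.val.2.2]
    refine ⟨?_, hr⟩
    rw [norm_mul, Complex.norm_real, Real.norm_of_nonneg (Real.sqrt_nonneg _), mul_pow, mul_pow,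
      Real.sq_sqrt (by linarith)]
    linear_combination (1 - y.val.2.1 ^ 2) * y.2⟩

lemma continuous_radialSpindle : Continuous radialSpindle := by
  unfold radialSpindle
  fun_prop

lemma radialSpindle_rotateSphereCRR (s : Circle) (y : SphereCRR) :
    radialSpindle (rotateSphereCRR s y) = rotateSpindle s (radialSpindle y) := by
  ext
  · simp only [radialSpindle, rotateSphereCRR, rotateSpindle]
    ring
  · rfl
  · rfl

lemma eq_zero_and_eq_zero_of_norm_sq_add_sq_le_zero {E : Type*} [NormedAddCommGroup E]
    {x : E} {t : ℝ} (h : ‖x‖ ^ 2 + t ^ 2 ≤ 0) : x = 0 ∧ t = 0 :=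
  ⟨norm_eq_zero.1 (pow_eq_zero_iff two_ne_zero |>.1 (by nlinarith [sq_nonneg t])),
    pow_eq_zero_iff two_ne_zero |>.1 (by nlinarith [sq_nonneg ‖x‖])⟩

/-- At the poles `h = ±1` the divisions by `√(1 - h²) = 0` return `0`, which is the right value. -/
noncomputable def spindleToSphereCRR (e : Spindle) : SphereCRR :=
  ⟨(e.val.1 / (√(1 - e.val.2.1 ^ 2) : ℂ), e.val.2.1, e.val.2.2 / √(1 - e.val.2.1 ^ 2)), by
    obtain ⟨⟨X, h, T⟩, hE, hh⟩ := e
    simp only at hE hh ⊢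
    rw [norm_div, Complex.norm_real, Real.norm_of_nonneg (Real.sqrt_nonneg _), div_pow, div_pow,
      Real.sq_sqrt (by linarith), add_right_comm, ← add_div, hE, sq, mul_self_div_self]
    ring⟩

lemma spindleToSphereCRR_radialSpindle (y : SphereCRR) :
    spindleToSphereCRR (radialSpindle y) = y := by
  obtain ⟨⟨x, r, t⟩, hy⟩ := y
  have hpole : √(1 - r ^ 2) = 0 → x = 0 ∧ t = 0 := fun h0 =>
    eq_zero_and_eq_zero_of_norm_sq_add_sq_le_zero (by nlinarith [Real.sqrt_eq_zero'.1 h0])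
  ext
  · exact mul_div_cancel_left_of_imp fun h0 => (hpole (Complex.ofReal_eq_zero.1 h0)).1
  · rfl
  · exact mul_div_cancel_left_of_imp fun h0 => (hpole h0).2

lemma radialSpindle_spindleToSphereCRR (e : Spindle) :
    radialSpindle (spindleToSphereCRR e) = e := by
  obtain ⟨⟨X, h, T⟩, hE, hh⟩ := e
  have hpole : √(1 - h ^ 2) = 0 → X = 0 ∧ T = 0 := fun h0 =>
    eq_zero_and_eq_zero_of_norm_sq_add_sq_le_zero (by nlinarith [Real.sqrt_eq_zero'.1 h0])
  ext
  · exact mul_div_cancel_of_imp' fun h0 => (hpole (Complex.ofReal_eq_zero.1 h0)).1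
  · rfl
  · exact mul_div_cancel_of_imp' fun h0 => (hpole h0).2

noncomputable def orbitHomeomorphSpindle : Quot orbitRelS4 ≃ₜ Spindle :=
  (continuous_quot_lift _ continuous_hopfSpindle).homeoOfEquivCompactToT2
    (f := Equiv.ofBijective orbitToSpindle orbitToSpindle_bijective)

noncomputable def sphereCRRHomeomorphSpindle : SphereCRR ≃ₜ Spindle :=
  continuous_radialSpindle.homeoOfEquivCompactToT2
    (f := ⟨radialSpindle, spindleToSphereCRR, spindleToSphereCRR_radialSpindle,
      radialSpindle_spindleToSphereCRR⟩)

/-- The orbit space `S⁴ / Circle` is homeomorphic to `S³ ⊂ ℂ × ℝ × ℝ`, in a way such that the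
induced action `s · (a, h, c) = (s a, h, c)` corresponds to `s · (x, r, t) = (s x, r, t)`. -/
theorem orbit_space_S4_circle_homeo_S3 :
    ∃ Φ : Quot orbitRelS4 ≃ₜ SphereCRR,
      ∀ (s : Circle) (x : SphereCRC),
        (Φ (Quot.mk orbitRelS4 (actFirst s x))).val =
          ((s : ℂ) * (Φ (Quot.mk orbitRelS4 x)).val.1,
            (Φ (Quot.mk orbitRelS4 x)).val.2.1,
            (Φ (Quot.mk orbitRelS4 x)).val.2.2) := by
  set Φ := orbitHomeomorphSpindle.trans sphereCRRHomeomorphSpindle.symm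
  refine ⟨Φ, fun s x => congrArg Subtype.val (?_ : _ = rotateSphereCRR s (Φ (Quot.mk _ x)))⟩
  rw [Homeomorph.trans_apply, Homeomorph.symm_apply_eq]
  change hopfSpindle (actFirst s x) = radialSpindle (rotateSphereCRR s _)
  rw [hopfSpindle_actFirst, radialSpindle_rotateSphereCRR]
  exact congrArg (rotateSpindle s) (sphereCRRHomeomorphSpindle.apply_symm_apply _).symm
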